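/- arXiv:1910.02871 — 3 statements merged into one kernel-verified Lean document; each statement's English description precedes it below -/
import Mathlib

section
/- Let Γ be an irreducible component of G = G₁ ∪ G₂. If G₁ is essential, then p₁(Γ) is a union of irreducible components of the stochastic dynamics of G₁. -/
/-- A reaction `ν → ν'` is active on `x` iff `ν ≤ x` componentwise. -/
def Active {σ : Type*} (ν x : σ → ℕ) : Prop := ∀ i, ν i ≤ x i

/-- One jump of the CTMC: firing an active reaction `ν → ν'` moves `x` to `x + ν' - ν`. -/
def Step {σ : Type*} (R : Set ((σ → ℕ) × (σ → ℕ))) (x y : σ → ℕ) : Prop :=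
  ∃ r ∈ R, Active r.1 x ∧ ∀ i, y i + r.1 i = x i + r.2 i

/-- `u` is accessible from `x` via a finite sequence of active reactions. -/
def Accessible {σ : Type*} (R : Set ((σ → ℕ) × (σ → ℕ))) : (σ → ℕ) → (σ → ℕ) → Prop :=
  Relation.ReflTransGen (Step R)

/-- An irreducible component (closed communicating class): a nonempty `Γ` such that for
`x ∈ Γ`, `u` is accessible from `x` iff `u ∈ Γ`. -/
def IsIrreducibleComponent {σ : Type*} (R : Set ((σ → ℕ) × (σ → ℕ)))
    (Γ : Set (σ → ℕ)) : Prop :=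
  Γ.Nonempty ∧ ∀ x ∈ Γ, ∀ u, Accessible R x u ↔ u ∈ Γ

/-- A network is essential if the whole state space is a union of closed communicating
classes. -/
def Essential {σ : Type*} (R : Set ((σ → ℕ) × (σ → ℕ))) : Prop :=
  ∀ x : σ → ℕ, ∃ Γ, IsIrreducibleComponent R Γ ∧ x ∈ Γ

/-- Zero-padding embedding of a state on species `S` into the full species set. -/
def pad {ι : Type*} [DecidableEq ι] (S : Finset ι) (v : ↥S → ℕ) : ι → ℕ :=
  fun i => if h : i ∈ S then v ⟨i, h⟩ else 0

/-- Coordinate projection onto the species of `S`. -/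
def proj {ι : Type*} (S : Finset ι) (x : ι → ℕ) : ↥S → ℕ := fun i => x ↑i

/-- The reactions of a subnetwork on species `S`, embedded (by zero-padding) as reactions
on the full species set. -/
def padR {ι : Type*} [DecidableEq ι] (S : Finset ι) (R : Set ((↥S → ℕ) × (↥S → ℕ))) :
    Set ((ι → ℕ) × (ι → ℕ)) := (fun r => (pad S r.1, pad S r.2)) '' R

/-!
A path of `G₁` starting at `p₁ x` lifts to a path of `G` starting at `x`: fire the padded
reactions, which leave the species outside `S₁` untouched. Hence `p₁(Γ)` is closed under
accessibility in `G₁`, and since `G₁` is essential, a closed set is the union of the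
irreducible components of `G₁` that it contains.
-/

theorem Accessible.mono {σ : Type*} {R R' : Set ((σ → ℕ) × (σ → ℕ))} (hR : R ⊆ R')
    {x y : σ → ℕ} (h : Accessible R x y) : Accessible R' x y :=
  Relation.ReflTransGen.mono (fun _ _ ⟨r, hr, hact, heq⟩ => ⟨r, hR hr, hact, heq⟩) _ _ h

theorem Essential.exists_sUnion_eq_of_closed {σ : Type*} {R : Set ((σ → ℕ) × (σ → ℕ))}
    (hR : Essential R) {A : Set (σ → ℕ)} (hA : ∀ x ∈ A, ∀ y, Accessible R x y → y ∈ A) :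
    ∃ 𝒞 : Set (Set (σ → ℕ)), (∀ C ∈ 𝒞, IsIrreducibleComponent R C) ∧ ⋃₀ 𝒞 = A := by
  refine ⟨{C | IsIrreducibleComponent R C ∧ C ⊆ A}, fun C hC => hC.1, ?_⟩
  refine (Set.sUnion_subset fun C hC => hC.2).antisymm fun x hx => ?_
  obtain ⟨C, hC, hxC⟩ := hR x
  exact ⟨C, ⟨hC, fun y hy => hA x hx y ((hC.2 x hxC y).mpr hy)⟩, hxC⟩

section Lift

variable {ι : Type*} [DecidableEq ι] {S : Finset ι} {R : Set ((↥S → ℕ) × (↥S → ℕ))}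

theorem Step.exists_padR_lift {x : ι → ℕ} {w : ↥S → ℕ} (h : Step R (proj S x) w) :
    ∃ x', Step (padR S R) x x' ∧ proj S x' = w := by
  obtain ⟨r, hr, hact, heq⟩ := h
  refine ⟨fun i => if hi : i ∈ S then w ⟨i, hi⟩ else x i,
    ⟨(pad S r.1, pad S r.2), ⟨r, hr, rfl⟩, fun i => ?_, fun i => ?_⟩, ?_⟩
  · simp only [pad]
    split
    · exact hact _
    · exact Nat.zero_le _
  · simp only [pad]
    split
    · exact heq _
    · rfl
  · funext i
    simp [proj]

theorem Accessible.exists_padR_lift {x : ι → ℕ} {w : ↥S → ℕ}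
    (h : Accessible R (proj S x) w) :
    ∃ x', Accessible (padR S R) x x' ∧ proj S x' = w := by
  induction h with
  | refl => exact ⟨x, .refl, rfl⟩
  | tail _ hstep ih =>
    obtain ⟨x', hxx', rfl⟩ := ih
    obtain ⟨x'', hx'x'', hproj⟩ := hstep.exists_padR_lift
    exact ⟨x'', hxx'.tail hx'x'', hproj⟩

theorem proj_image_closed_of_closed {R' : Set ((ι → ℕ) × (ι → ℕ))} (hR : padR S R ⊆ R')
    {Γ : Set (ι → ℕ)} (hΓ : ∀ x ∈ Γ, ∀ y, Accessible R' x y → y ∈ Γ) :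
    ∀ w ∈ proj S '' Γ, ∀ z, Accessible R w z → z ∈ proj S '' Γ := by
  rintro _ ⟨x, hx, rfl⟩ z hz
  obtain ⟨x', hxx', rfl⟩ := hz.exists_padR_lift
  exact ⟨x', hΓ x hx x' (hxx'.mono hR), rfl⟩

end Lift

theorem stmt6_general {ι : Type*} [DecidableEq ι] (S₁ S₂ : Finset ι)
    (R₁ : Set ((↥S₁ → ℕ) × (↥S₁ → ℕ))) (R₂ : Set ((↥S₂ → ℕ) × (↥S₂ → ℕ)))
    (h₁ : Essential R₁)
    (Γ : Set (ι → ℕ)) (hΓ : IsIrreducibleComponent (padR S₁ R₁ ∪ padR S₂ R₂) Γ) :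
    ∃ 𝒞 : Set (Set (↥S₁ → ℕ)),
      (∀ C ∈ 𝒞, IsIrreducibleComponent R₁ C) ∧ ⋃₀ 𝒞 = proj S₁ '' Γ :=
  h₁.exists_sUnion_eq_of_closed <|
    proj_image_closed_of_closed Set.subset_union_left fun x hx y hxy => (hΓ.2 x hx y).mp hxy

/-- if `G₁` is essential and `Γ` is an irreducible component of the union,
then `p₁(Γ)` is a union of irreducible components of `G₁`. -/
theorem stmt6 {ι : Type*} [Fintype ι] [DecidableEq ι] (S₁ S₂ : Finset ι)
    (hcov : S₁ ∪ S₂ = Finset.univ)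
    (R₁ : Set ((↥S₁ → ℕ) × (↥S₁ → ℕ))) (R₂ : Set ((↥S₂ → ℕ) × (↥S₂ → ℕ)))
    (h₁ : Essential R₁)
    (Γ : Set (ι → ℕ)) (hΓ : IsIrreducibleComponent (padR S₁ R₁ ∪ padR S₂ R₂) Γ) :
    ∃ 𝒞 : Set (Set (↥S₁ → ℕ)),
      (∀ C ∈ 𝒞, IsIrreducibleComponent R₁ C) ∧ ⋃₀ 𝒞 = proj S₁ '' Γ :=
  stmt6_general S₁ S₂ R₁ R₂ h₁ Γ hΓ
end

section
/- Let G = G₁ ∪ G₂ be a reaction-disjoint union of reaction networks with S₁ ∩ S₂ ≠ ∅, and let Γ be an irreducible component of G. Suppose: (B1) p₁(Γ) is a union of irreducible components of G₁ each carrying a product-form stationary distribution π₁(p₁(x)) ∝ ∏_{i∈S₁∖(S₁∩S₂)} f_i(x_i) · ∏_{i∈S₁∩S₂} f_i¹(x_i); (B2) the analogous statement holds for G₂ with shared-species factors f_i²; (B3) there exists α > 0 with α f_i¹(x_i) = f_i²(x_i) for all x ∈ Γ and all i ∈ S₁∩S₂. If the function ∏_{i∈S} f_i(x_i) (with f_i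 := f_i² on shared species) is summable over Γ, then its normalization π(x) = Z⁻¹ ∏_{i∈S} f_i(x_i) is a stationary distribution of G on Γ, and G is generalized balanced for π with respect to {(R₁,R₁),(R₂,R₂)}. -/
/-!
On `Γ`, the product `P = ∏ᵢ fᵢ(xᵢ)` factors as `φ₁(p₁ x)` times a function of the species
outside `S₁` (using `α f¹ = f²` on shared species), and likewise for `S₂`. Reactions of `Rₖ`
leave the species outside `Sₖ` unchanged, and for an active reaction the source state lies in
`Γ` iff its projection lies in the component of `pₖ(x)`. So the master equation of `Rₖ` on `Γ`
is, state by state, a multiple of that of `Gₖ` on this component, which holds by (B1)/(B2).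
Adding the two gives the master equation of `R₁ ∪ R₂`. The normalisation is positive unless
`Γ` is a single state with a negative coordinate, where (B1)/(B2) still force `P ≠ 0`.
-/

/-- One jump of the CTMC on the nonnegative orthant of `ℤ^σ`: from a nonnegative state
`x`, an active reaction `ν → ν'` moves `x` to `x + ν' - ν`. -/
def StepZ {σ : Type*} (R : Finset ((σ → ℤ) × (σ → ℤ))) (x y : σ → ℤ) : Prop :=
  (∀ i, 0 ≤ x i) ∧ ∃ r ∈ R, (∀ i, r.1 i ≤ x i) ∧ y = x + r.2 - r.1

/-- Accessibility via finite sequences of active reactions. -/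
def AccessibleZ {σ : Type*} (R : Finset ((σ → ℤ) × (σ → ℤ))) :
    (σ → ℤ) → (σ → ℤ) → Prop :=
  Relation.ReflTransGen (StepZ R)

/-- An irreducible component (closed communicating class). -/
def IsIrreducibleComponentZ {σ : Type*} (R : Finset ((σ → ℤ) × (σ → ℤ)))
    (Γ : Set (σ → ℤ)) : Prop :=
  Γ.Nonempty ∧ ∀ x ∈ Γ, ∀ u, AccessibleZ R x u ↔ u ∈ Γ

/-- A network is essential if every state of the nonnegative orthant lies in a closed
communicating class. -/
def EssentialZ {σ : Type*} (R : Finset ((σ → ℤ) × (σ → ℤ))) : Prop :=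
  ∀ x : σ → ℤ, (∀ i, 0 ≤ x i) → ∃ Γ, IsIrreducibleComponentZ R Γ ∧ x ∈ Γ

/-- The master (stationarity) equation for `π` on `Γ`, restricted to the reactions of
`R`. -/
def MasterEq {σ : Type*} (R : Finset ((σ → ℤ) × (σ → ℤ)))
    (lam : ((σ → ℤ) × (σ → ℤ)) → (σ → ℤ) → ℝ) (Γ : Set (σ → ℤ))
    (π : (σ → ℤ) → ℝ) : Prop :=
  ∀ x ∈ Γ, ∑ r ∈ R, π (x + r.1 - r.2) * lam r (x + r.1 - r.2) = π x * ∑ r ∈ R, lam r x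

/-- `π` is a stationary distribution of the network `R` on `Γ`. -/
def IsStationaryDist {σ : Type*} (R : Finset ((σ → ℤ) × (σ → ℤ)))
    (lam : ((σ → ℤ) × (σ → ℤ)) → (σ → ℤ) → ℝ) (Γ : Set (σ → ℤ))
    (π : (σ → ℤ) → ℝ) : Prop :=
  (∀ z, 0 ≤ π z) ∧ (∀ z ∉ Γ, π z = 0) ∧ (∑' z : Γ, π ↑z = 1) ∧ MasterEq R lam Γ π

/-- Zero-padding embedding of a state on species `S` into the full species set. -/
def padZ {ι : Type*} [DecidableEq ι] (S : Finset ι) (v : ↥S → ℤ) : ι → ℤ :=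
  fun i => if h : i ∈ S then v ⟨i, h⟩ else 0

/-- Coordinate projection onto the species of `S`. -/
def projZ {ι : Type*} (S : Finset ι) (x : ι → ℤ) : ↥S → ℤ := fun i => x ↑i

/-- The reactions of a subnetwork on species `S`, embedded by zero-padding. -/
def padRZ {ι : Type*} [Fintype ι] [DecidableEq ι] (S : Finset ι)
    (R : Finset ((↥S → ℤ) × (↥S → ℤ))) : Finset ((ι → ℤ) × (ι → ℤ)) :=
  R.image (fun r => (padZ S r.1, padZ S r.2))

namespace IsIrreducibleComponentZ

variable {σ : Type*} {R : Finset ((σ → ℤ) × (σ → ℤ))} {Γ C : Set (σ → ℤ)}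

theorem mem_of_accessibleZ (hΓ : IsIrreducibleComponentZ R Γ) {x y : σ → ℤ} (hx : x ∈ Γ)
    (h : AccessibleZ R x y) : y ∈ Γ :=
  (hΓ.2 x hx y).mp h

theorem eq_of_mem (hΓ : IsIrreducibleComponentZ R Γ) (hC : IsIrreducibleComponentZ R C)
    {z : σ → ℤ} (hzΓ : z ∈ Γ) (hzC : z ∈ C) : Γ = C :=
  Set.ext fun u => (hΓ.2 z hzΓ u).symm.trans (hC.2 z hzC u)

/-- No reaction fires from a state with a negative coordinate. -/
theorem eq_singleton_of_not_nonneg (hΓ : IsIrreducibleComponentZ R Γ) {x : σ → ℤ}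
    (hx : x ∈ Γ) (hneg : ¬ ∀ i, 0 ≤ x i) : Γ = {x} := by
  refine Set.eq_singleton_iff_unique_mem.mpr ⟨hx, fun u hu => ?_⟩
  rcases Relation.ReflTransGen.cases_head ((hΓ.2 x hx u).mpr hu) with h | ⟨_, hstep, _⟩
  · exact h.symm
  · exact absurd hstep.1 hneg

end IsIrreducibleComponentZ

theorem stepZ_add_sub {σ : Type*} {R : Finset ((σ → ℤ) × (σ → ℤ))} {r : (σ → ℤ) × (σ → ℤ)}
    (hr : r ∈ R) (hr₁ : ∀ i, 0 ≤ r.1 i) {y : σ → ℤ} (hle : ∀ i, r.2 i ≤ y i) :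
    StepZ R (y + r.1 - r.2) y := by
  refine ⟨fun i => ?_, r, hr, fun i => ?_, by abel⟩ <;>
  · have := hr₁ i
    have := hle i
    simp only [Pi.add_apply, Pi.sub_apply]
    omega

section Stationary

variable {σ : Type*} {R R' : Finset ((σ → ℤ) × (σ → ℤ))}
  {lam : ((σ → ℤ) × (σ → ℤ)) → (σ → ℤ) → ℝ} {Γ : Set (σ → ℤ)} {π : (σ → ℤ) → ℝ}

theorem MasterEq.const_mul (h : MasterEq R lam Γ π) (c : ℝ) :
    MasterEq R lam Γ (fun x => c * π x) := by
  intro x hx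
  simp only [mul_assoc, ← Finset.mul_sum, h x hx]

theorem MasterEq.union [DecidableEq ((σ → ℤ) × (σ → ℤ))] (hdisj : Disjoint R R')
    (h : MasterEq R lam Γ π) (h' : MasterEq R' lam Γ π) : MasterEq (R ∪ R') lam Γ π := by
  intro x hx
  rw [Finset.sum_union hdisj, Finset.sum_union hdisj, mul_add, h x hx, h' x hx]

theorem IsStationaryDist.apply_eq_one_of_singleton {y : σ → ℤ}
    (h : IsStationaryDist R lam {y} π) : π y = 1 := by
  simpa using h.2.2.1

theorem isStationaryDist_indicator_div_tsum (hΓ : IsIrreducibleComponentZ R Γ)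
    {P : (σ → ℤ) → ℝ} (hsum : Summable fun z : Γ => P z)
    (hpos : ∀ x ∈ Γ, (∀ i, 0 ≤ x i) → 0 < P x) (hsing : ∀ x, Γ = {x} → P x ≠ 0)
    (hM : MasterEq R lam Γ (Γ.indicator fun x => P x / ∑' z : Γ, P z)) :
    IsStationaryDist R lam Γ (Γ.indicator fun x => P x / ∑' z : Γ, P z) := by
  have hZ : (∑' z : Γ, P z) ≠ 0 ∧ ∀ x ∈ Γ, 0 ≤ P x / ∑' z : Γ, P z := by
    by_cases hnn : ∀ x ∈ Γ, ∀ i, 0 ≤ x i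
    · obtain ⟨x₀, hx₀⟩ := hΓ.1
      have hZpos : 0 < ∑' z : Γ, P z := hsum.tsum_pos (fun z => (hpos z z.2 (hnn z z.2)).le)
        ⟨x₀, hx₀⟩ (hpos x₀ hx₀ (hnn x₀ hx₀))
      exact ⟨hZpos.ne', fun x hx => div_nonneg (hpos x hx (hnn x hx)).le hZpos.le⟩
    · push Not at hnn
      obtain ⟨x, hx, i, hi⟩ := hnn
      obtain rfl := hΓ.eq_singleton_of_not_nonneg hx fun h => (h i).not_gt hi
      simp [hsing x rfl]
  refine ⟨Set.indicator_nonneg hZ.2, fun z hz => Set.indicator_of_notMem hz _, ?_, hM⟩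
  rw [tsum_congr fun z : Γ => Set.indicator_of_mem z.2 _, tsum_div_const, div_self hZ.1]

end Stationary

@[simp]
theorem projZ_apply {ι : Type*} (S : Finset ι) (x : ι → ℤ) (i : ↥S) : projZ S x i = x i := rfl

section Padding

variable {ι : Type*} [DecidableEq ι] (S : Finset ι)

@[simp]
theorem padZ_apply_of_mem {i : ι} (hi : i ∈ S) (v : ↥S → ℤ) : padZ S v i = v ⟨i, hi⟩ :=
  dif_pos hi

@[simp]
theorem padZ_apply_of_notMem {i : ι} (hi : i ∉ S) (v : ↥S → ℤ) : padZ S v i = 0 :=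
  dif_neg hi

@[simp]
theorem projZ_padZ (v : ↥S → ℤ) : projZ S (padZ S v) = v :=
  funext fun i => dif_pos i.2

theorem padZ_injective : Function.Injective (padZ S) := fun v w h => by
  simpa using congrArg (projZ S) h

theorem padZ_zero : padZ S 0 = 0 := by
  funext i
  by_cases hi : i ∈ S <;> simp [hi]

theorem padZ_add (u v : ↥S → ℤ) : padZ S (u + v) = padZ S u + padZ S v := by
  funext i
  by_cases hi : i ∈ S <;> simp [hi]

theorem padZ_sub (u v : ↥S → ℤ) : padZ S (u - v) = padZ S u - padZ S v := by
  funext i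
  by_cases hi : i ∈ S <;> simp [hi]

theorem projZ_add_padZ_sub_padZ (x : ι → ℤ) (u v : ↥S → ℤ) :
    projZ S (x + padZ S u - padZ S v) = projZ S x + u - v := by
  funext i
  simp [i.2]

theorem add_padZ_sub_padZ_apply_of_notMem (x : ι → ℤ) (u v : ↥S → ℤ) {i : ι} (hi : i ∉ S) :
    (x + padZ S u - padZ S v) i = x i := by
  simp [hi]

theorem prod_compl_add_padZ_sub_padZ [Fintype ι] (g : ι → ℤ → ℝ) (x : ι → ℤ) (u v : ↥S → ℤ) :
    ∏ i ∈ Sᶜ, g i ((x + padZ S u - padZ S v) i) = ∏ i ∈ Sᶜ, g i (x i) :=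
  Finset.prod_congr rfl fun i hi => by
    rw [add_padZ_sub_padZ_apply_of_notMem S x u v (Finset.mem_compl.mp hi)]

theorem prod_eq_prod_projZ_mul_prod_compl [Fintype ι] (g : ι → ℤ → ℝ) (x : ι → ℤ) :
    ∏ i, g i (x i) = (∏ i : ↥S, g i (projZ S x i)) * ∏ i ∈ Sᶜ, g i (x i) := by
  rw [← Finset.prod_mul_prod_compl S, ← Finset.prod_coe_sort S fun i => g i (x i)]
  rfl

theorem sum_padRZ [Fintype ι] {M : Type*} [AddCommMonoid M] (R : Finset ((↥S → ℤ) × (↥S → ℤ)))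
    (g : (ι → ℤ) × (ι → ℤ) → M) :
    ∑ r ∈ padRZ S R, g r = ∑ r ∈ R, g (padZ S r.1, padZ S r.2) :=
  Finset.sum_image fun _ _ _ _ h => ((padZ_injective S).prodMap (padZ_injective S)) h

theorem AccessibleZ.lift_padRZ [Fintype ι] {R : Finset ((↥S → ℤ) × (↥S → ℤ))}
    {Rall : Finset ((ι → ℤ) × (ι → ℤ))} (hsub : padRZ S R ⊆ Rall) {w : ι → ℤ}
    (hw : ∀ i ∉ S, 0 ≤ w i) {z : ↥S → ℤ} (h : AccessibleZ R (projZ S w) z) :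
    AccessibleZ Rall w (w + padZ S (z - projZ S w)) := by
  induction h with
  | refl =>
    rw [sub_self, padZ_zero, add_zero]
    exact Relation.ReflTransGen.refl
  | tail _ hbc ih =>
    obtain ⟨hb, r, hr, hrb, rfl⟩ := hbc
    refine ih.tail ⟨fun i => ?_, _, hsub (Finset.mem_image_of_mem _ hr), fun i => ?_, ?_⟩
    · by_cases hi : i ∈ S
      · simpa [hi] using hb ⟨i, hi⟩
      · simpa [hi] using hw i hi
    · by_cases hi : i ∈ S
      · simpa [hi] using hrb ⟨i, hi⟩
      · simpa [hi] using hw i hi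
    · simp only [padZ_add, padZ_sub]
      abel

end Padding

section Lift

variable {ι : Type*} [Fintype ι] [DecidableEq ι] {S : Finset ι}
  {R : Finset ((↥S → ℤ) × (↥S → ℤ))} {Rall : Finset ((ι → ℤ) × (ι → ℤ))}
  {Γ : Set (ι → ℤ)} {𝒞 : Set (Set (↥S → ℤ))}

theorem add_padZ_sub_padZ_mem_iff (hRnn : ∀ r ∈ R, ∀ i, 0 ≤ r.1 i)
    (hsub : padRZ S R ⊆ Rall) (hΓ : IsIrreducibleComponentZ Rall Γ)
    (h𝒞 : ∀ C ∈ 𝒞, IsIrreducibleComponentZ R C) (hcov : ⋃₀ 𝒞 = projZ S '' Γ)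
    {x : ι → ℤ} (hx : x ∈ Γ) {C : Set (↥S → ℤ)} (hC : C ∈ 𝒞) (hxC : projZ S x ∈ C)
    {r : (↥S → ℤ) × (↥S → ℤ)} (hr : r ∈ R) (hle : ∀ i, r.2 i ≤ projZ S x i) :
    x + padZ S r.1 - padZ S r.2 ∈ Γ ↔ projZ S x + r.1 - r.2 ∈ C := by
  constructor
  · intro hx'
    obtain ⟨C', hC', hxC'⟩ : projZ S x + r.1 - r.2 ∈ ⋃₀ 𝒞 := by
      rw [hcov, ← projZ_add_padZ_sub_padZ]
      exact Set.mem_image_of_mem _ hx'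
    have hback : projZ S x ∈ C' :=
      (h𝒞 C' hC').mem_of_accessibleZ hxC' (.single (stepZ_add_sub hr (hRnn r hr) hle))
    rwa [(h𝒞 C hC).eq_of_mem (h𝒞 C' hC') hxC hback]
  · intro hy
    by_cases hnn : ∀ i, 0 ≤ x i
    · have hacc := AccessibleZ.lift_padRZ S hsub (fun i _ => hnn i)
        (((h𝒞 C hC).2 _ hxC _).mpr hy)
      rw [show projZ S x + r.1 - r.2 - projZ S x = r.1 - r.2 by abel, padZ_sub,
        ← add_sub_assoc] at hacc
      exact hΓ.mem_of_accessibleZ hx hacc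
    · obtain rfl := hΓ.eq_singleton_of_not_nonneg hx hnn
      have hCsub : C ⊆ {projZ S x} := by
        rw [← Set.image_singleton, ← hcov]
        exact Set.subset_sUnion_of_mem hC
      have hr₁₂ : r.1 = r.2 := by
        have := hCsub hy
        rwa [Set.mem_singleton_iff, add_sub_assoc, add_eq_left, sub_eq_zero] at this
      rw [hr₁₂, add_sub_cancel_right]
      exact hx

theorem MasterEq.padRZ_of_sUnion (hRnn : ∀ r ∈ R, ∀ i, 0 ≤ r.1 i)
    {lam : ((↥S → ℤ) × (↥S → ℤ)) → (↥S → ℤ) → ℝ}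
    (hlam0 : ∀ r ∈ R, ∀ y, ¬ (∀ i, r.1 i ≤ y i) → lam r y = 0)
    {Lam : ((ι → ℤ) × (ι → ℤ)) → (ι → ℤ) → ℝ}
    (hLam : ∀ r ∈ R, ∀ x : ι → ℤ, Lam (padZ S r.1, padZ S r.2) x = lam r (projZ S x))
    (hsub : padRZ S R ⊆ Rall) (hΓ : IsIrreducibleComponentZ Rall Γ)
    (h𝒞 : ∀ C ∈ 𝒞, IsIrreducibleComponentZ R C) (hcov : ⋃₀ 𝒞 = projZ S '' Γ)
    {φ : (↥S → ℤ) → ℝ} (hφ : ∀ C ∈ 𝒞, MasterEq R lam C (C.indicator φ))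
    {π B : (ι → ℤ) → ℝ} (hπ : ∀ x ∈ Γ, π x = φ (projZ S x) * B x)
    (hB : ∀ x u v, B (x + padZ S u - padZ S v) = B x) :
    MasterEq (padRZ S R) Lam Γ (Γ.indicator π) := by
  intro x hx
  obtain ⟨C, hC, hxC⟩ : projZ S x ∈ ⋃₀ 𝒞 := hcov ▸ Set.mem_image_of_mem _ hx
  have hterm : ∀ r ∈ R, Γ.indicator π (x + padZ S r.1 - padZ S r.2) *
      Lam (padZ S r.1, padZ S r.2) (x + padZ S r.1 - padZ S r.2) =
      B x * (C.indicator φ (projZ S x + r.1 - r.2) * lam r (projZ S x + r.1 - r.2)) := by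
    intro r hr
    rw [hLam r hr, projZ_add_padZ_sub_padZ]
    by_cases hl : lam r (projZ S x + r.1 - r.2) = 0
    · simp [hl]
    have hle : ∀ i, r.2 i ≤ projZ S x i := fun i => by
      have := not_not.mp (mt (hlam0 r hr _) hl) i
      simp only [Pi.add_apply, Pi.sub_apply] at this
      omega
    have hiff := add_padZ_sub_padZ_mem_iff hRnn hsub hΓ h𝒞 hcov hx hC hxC hr hle
    by_cases hmem : x + padZ S r.1 - padZ S r.2 ∈ Γ
    · rw [Set.indicator_of_mem hmem, Set.indicator_of_mem (hiff.mp hmem), hπ _ hmem,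
        projZ_add_padZ_sub_padZ, hB]
      ring
    · rw [Set.indicator_of_notMem hmem, Set.indicator_of_notMem (mt hiff.mpr hmem)]
      ring
  calc ∑ r ∈ padRZ S R, Γ.indicator π (x + r.1 - r.2) * Lam r (x + r.1 - r.2)
      = ∑ r ∈ R, B x * (C.indicator φ (projZ S x + r.1 - r.2) *
          lam r (projZ S x + r.1 - r.2)) := by
        rw [sum_padRZ]
        exact Finset.sum_congr rfl hterm
    _ = B x * (C.indicator φ (projZ S x) * ∑ r ∈ R, lam r (projZ S x)) := by
        rw [← Finset.mul_sum, hφ C hC _ hxC]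
    _ = Γ.indicator π x * ∑ r ∈ padRZ S R, Lam r x := by
        rw [sum_padRZ, Finset.sum_congr rfl fun r hr => hLam r hr x,
          Set.indicator_of_mem hx, Set.indicator_of_mem hxC, hπ x hx]
        ring

end Lift

theorem ne_zero_of_sUnion_eq_singleton {σ : Type*} {R : Finset ((σ → ℤ) × (σ → ℤ))}
    {lam : ((σ → ℤ) × (σ → ℤ)) → (σ → ℤ) → ℝ} {𝒞 : Set (Set (σ → ℤ))} {φ : (σ → ℤ) → ℝ}
    (hstat : ∀ C ∈ 𝒞, ∃ c : ℝ, IsStationaryDist R lam C (C.indicator fun y => c * φ y))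
    {y : σ → ℤ} (hcov : ⋃₀ 𝒞 = {y}) : φ y ≠ 0 := by
  obtain ⟨C, hC, hyC⟩ : y ∈ ⋃₀ 𝒞 := hcov ▸ rfl
  obtain rfl : C = {y} := Set.eq_singleton_iff_unique_mem.mpr
    ⟨hyC, fun z hz => by simpa [hcov] using Set.subset_sUnion_of_mem hC hz⟩
  obtain ⟨c, hsd⟩ := hstat _ hC
  intro hφ
  simpa [hφ] using hsd.apply_eq_one_of_singleton

theorem MasterEq.padRZ_prod_div {ι : Type*} [Fintype ι] [DecidableEq ι] {S : Finset ι}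
    {R : Finset ((↥S → ℤ) × (↥S → ℤ))} {Rall : Finset ((ι → ℤ) × (ι → ℤ))}
    {Γ : Set (ι → ℤ)} {𝒞 : Set (Set (↥S → ℤ))} (hRnn : ∀ r ∈ R, ∀ i, 0 ≤ r.1 i)
    {lam : ((↥S → ℤ) × (↥S → ℤ)) → (↥S → ℤ) → ℝ}
    (hlam0 : ∀ r ∈ R, ∀ y, ¬ (∀ i, r.1 i ≤ y i) → lam r y = 0)
    {Lam : ((ι → ℤ) × (ι → ℤ)) → (ι → ℤ) → ℝ}
    (hLam : ∀ r ∈ R, ∀ x : ι → ℤ, Lam (padZ S r.1, padZ S r.2) x = lam r (projZ S x))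
    (hsub : padRZ S R ⊆ Rall) (hΓ : IsIrreducibleComponentZ Rall Γ)
    (h𝒞 : ∀ C ∈ 𝒞, IsIrreducibleComponentZ R C) (hcov : ⋃₀ 𝒞 = projZ S '' Γ)
    {g h : ι → ℤ → ℝ} {κ : ι → ℝ} (hgh : ∀ x ∈ Γ, ∀ i ∈ S, g i (x i) = κ i * h i (x i))
    (hstat : ∀ C ∈ 𝒞, ∃ c > (0 : ℝ),
      IsStationaryDist R lam C (C.indicator fun y => c * ∏ i : ↥S, h i (y i)))
    (Z : ℝ) : MasterEq (padRZ S R) Lam Γ (Γ.indicator fun x => (∏ i, g i (x i)) / Z) := by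
  refine MasterEq.padRZ_of_sUnion hRnn hlam0 hLam hsub hΓ h𝒞 hcov
    (φ := fun y => ∏ i : ↥S, h i (y i))
    (B := fun x => (∏ i : ↥S, κ i) * (∏ i ∈ Sᶜ, g i (x i)) / Z) (fun C hC => ?_)
    (fun x hx => ?_) (fun x u v => ?_)
  · obtain ⟨c, hc, hsd⟩ := hstat C hC
    convert hsd.2.2.2.const_mul c⁻¹ using 1
    funext y
    by_cases hy : y ∈ C <;> simp [hy, hc.ne']
  · rw [prod_eq_prod_projZ_mul_prod_compl S]
    simp only [projZ_apply]
    rw [Finset.prod_congr rfl fun (i : ↥S) _ => hgh x hx i i.2, Finset.prod_mul_distrib]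
    ring
  · simp only [prod_compl_add_padZ_sub_padZ]

open Classical in
theorem stmt10_general {ι : Type*} [Fintype ι] [DecidableEq ι] (S₁ S₂ : Finset ι)
    (hcov : S₁ ∪ S₂ = Finset.univ)
    (R₁ : Finset ((↥S₁ → ℤ) × (↥S₁ → ℤ))) (R₂ : Finset ((↥S₂ → ℤ) × (↥S₂ → ℤ)))
    (hR₁nn : ∀ r ∈ R₁, ∀ i, 0 ≤ r.1 i ∧ 0 ≤ r.2 i)
    (hR₂nn : ∀ r ∈ R₂, ∀ i, 0 ≤ r.1 i ∧ 0 ≤ r.2 i)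
    (hdisj : Disjoint (padRZ S₁ R₁) (padRZ S₂ R₂))
    (lam₁ : ((↥S₁ → ℤ) × (↥S₁ → ℤ)) → (↥S₁ → ℤ) → ℝ)
    (lam₂ : ((↥S₂ → ℤ) × (↥S₂ → ℤ)) → (↥S₂ → ℤ) → ℝ)
    (hlam₁0 : ∀ r ∈ R₁, ∀ y, ¬ (∀ i, r.1 i ≤ y i) → lam₁ r y = 0)
    (hlam₂0 : ∀ r ∈ R₂, ∀ y, ¬ (∀ i, r.1 i ≤ y i) → lam₂ r y = 0)
    (Lam : ((ι → ℤ) × (ι → ℤ)) → (ι → ℤ) → ℝ)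
    (hLam₁ : ∀ r ∈ R₁, ∀ x : ι → ℤ, Lam (padZ S₁ r.1, padZ S₁ r.2) x = lam₁ r (projZ S₁ x))
    (hLam₂ : ∀ r ∈ R₂, ∀ x : ι → ℤ, Lam (padZ S₂ r.1, padZ S₂ r.2) x = lam₂ r (projZ S₂ x))
    (Γ : Set (ι → ℤ)) (hΓ : IsIrreducibleComponentZ (padRZ S₁ R₁ ∪ padRZ S₂ R₂) Γ)
    -- product-form functions: `f` for non-shared species, `f1`/`f2` for shared species
    (f f1 f2 : ι → ℤ → ℝ)
    (hfpos : ∀ i m, 0 ≤ m → 0 < f i m)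
    (hf2pos : ∀ i m, 0 ≤ m → 0 < f2 i m)
    -- (B1): p₁(Γ) is a union of irreducible components of G₁ carrying product-form
    -- stationary distributions
    (hB1 : ∃ 𝒞 : Set (Set (↥S₁ → ℤ)),
      (∀ C ∈ 𝒞, IsIrreducibleComponentZ R₁ C) ∧ ⋃₀ 𝒞 = projZ S₁ '' Γ ∧
      ∀ C ∈ 𝒞, ∃ c > (0:ℝ), IsStationaryDist R₁ lam₁ C
        (C.indicator fun y => c * ∏ i : ↥S₁,
          (if (↑i : ι) ∈ S₂ then f1 ↑i (y i) else f ↑i (y i))))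
    -- (B2): the analogous statement for G₂
    (hB2 : ∃ 𝒞 : Set (Set (↥S₂ → ℤ)),
      (∀ C ∈ 𝒞, IsIrreducibleComponentZ R₂ C) ∧ ⋃₀ 𝒞 = projZ S₂ '' Γ ∧
      ∀ C ∈ 𝒞, ∃ c > (0:ℝ), IsStationaryDist R₂ lam₂ C
        (C.indicator fun y => c * ∏ i : ↥S₂,
          (if (↑i : ι) ∈ S₁ then f2 ↑i (y i) else f ↑i (y i))))
    -- (B3): the shared-species factors agree up to a positive constant on Γ
    (hB3 : ∃ α > (0:ℝ), ∀ x ∈ Γ, ∀ i ∈ S₁ ∩ S₂, α * f1 i (x i) = f2 i (x i))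
    -- summability of the combined product-form function over Γ
    (hsum : Summable (fun z : Γ =>
      ∏ i : ι, (if i ∈ S₁ ∩ S₂ then f2 i ((z : ι → ℤ) i) else f i ((z : ι → ℤ) i)))) :
    IsStationaryDist (padRZ S₁ R₁ ∪ padRZ S₂ R₂) Lam Γ
      (Γ.indicator fun x =>
        (∏ i : ι, (if i ∈ S₁ ∩ S₂ then f2 i (x i) else f i (x i))) /
        (∑' z : Γ, ∏ i : ι, (if i ∈ S₁ ∩ S₂ then f2 i ((z : ι → ℤ) i)
          else f i ((z : ι → ℤ) i)))) ∧
    MasterEq (padRZ S₁ R₁) Lam Γ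
      (Γ.indicator fun x =>
        (∏ i : ι, (if i ∈ S₁ ∩ S₂ then f2 i (x i) else f i (x i))) /
        (∑' z : Γ, ∏ i : ι, (if i ∈ S₁ ∩ S₂ then f2 i ((z : ι → ℤ) i)
          else f i ((z : ι → ℤ) i)))) ∧
    MasterEq (padRZ S₂ R₂) Lam Γ
      (Γ.indicator fun x =>
        (∏ i : ι, (if i ∈ S₁ ∩ S₂ then f2 i (x i) else f i (x i))) /
        (∑' z : Γ, ∏ i : ι, (if i ∈ S₁ ∩ S₂ then f2 i ((z : ι → ℤ) i)
          else f i ((z : ι → ℤ) i)))) := by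
  obtain ⟨𝒞₁, h𝒞₁, hcov₁, hstat₁⟩ := hB1
  obtain ⟨𝒞₂, h𝒞₂, hcov₂, hstat₂⟩ := hB2
  obtain ⟨α, -, hα⟩ := hB3
  set g : ι → ℤ → ℝ := fun i m => if i ∈ S₁ ∩ S₂ then f2 i m else f i m
  have hM₁ := MasterEq.padRZ_prod_div (fun r hr i => (hR₁nn r hr i).1) hlam₁0 hLam₁
    Finset.subset_union_left hΓ h𝒞₁ hcov₁ (g := g)
    (h := fun i m => if i ∈ S₂ then f1 i m else f i m)
    (κ := fun i => if i ∈ S₂ then α else 1)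
    (fun x hx i hi => by by_cases h₂ : i ∈ S₂ <;> simp [g, hi, h₂, ← hα x hx i]) hstat₁
  have hM₂ := MasterEq.padRZ_prod_div (fun r hr i => (hR₂nn r hr i).1) hlam₂0 hLam₂
    Finset.subset_union_right hΓ h𝒞₂ hcov₂ (g := g)
    (h := fun i m => if i ∈ S₁ then f2 i m else f i m)
    (κ := fun _ => 1) (fun x _ i hi => by simp [g, hi]) hstat₂
  refine ⟨isStationaryDist_indicator_div_tsum hΓ hsum (fun x _ hx => ?_) (fun x hΓx => ?_)
    ((hM₁ _).union hdisj (hM₂ _)), hM₁ _, hM₂ _⟩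
  · exact Finset.prod_pos fun i _ => by
      split_ifs
      exacts [hf2pos i _ (hx i), hfpos i _ (hx i)]
  · have hne₁ := ne_zero_of_sUnion_eq_singleton (fun C hC => (hstat₁ C hC).imp fun _ => And.right)
      (y := projZ S₁ x) (by rw [hcov₁, hΓx, Set.image_singleton])
    have hne₂ := ne_zero_of_sUnion_eq_singleton (fun C hC => (hstat₂ C hC).imp fun _ => And.right)
      (y := projZ S₂ x) (by rw [hcov₂, hΓx, Set.image_singleton])
    refine Finset.prod_ne_zero_iff.mpr fun i _ => ?_
    by_cases h₂ : i ∈ S₂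
    · simpa [h₂] using Finset.prod_ne_zero_iff.mp hne₂ ⟨i, h₂⟩ (Finset.mem_univ _)
    · have h₁ : i ∈ S₁ := (Finset.mem_union.mp (hcov ▸ Finset.mem_univ i)).resolve_right h₂
      simpa [h₂] using Finset.prod_ne_zero_iff.mp hne₁ ⟨i, h₁⟩ (Finset.mem_univ _)

open Classical in
/-- Theorem `patch_CRN1`: product-form stationary distributions of the two
parts of a reaction-disjoint union, agreeing (up to a constant `α`) on the shared
species, combine to a product-form stationary distribution of the union, which is
generalized balanced for `{(R₁,R₁),(R₂,R₂)}`. -/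
theorem stmt10 {ι : Type*} [Fintype ι] [DecidableEq ι] (S₁ S₂ : Finset ι)
    (hcov : S₁ ∪ S₂ = Finset.univ) (hshared : (S₁ ∩ S₂).Nonempty)
    (R₁ : Finset ((↥S₁ → ℤ) × (↥S₁ → ℤ))) (R₂ : Finset ((↥S₂ → ℤ) × (↥S₂ → ℤ)))
    (hR₁nn : ∀ r ∈ R₁, ∀ i, 0 ≤ r.1 i ∧ 0 ≤ r.2 i)
    (hR₂nn : ∀ r ∈ R₂, ∀ i, 0 ≤ r.1 i ∧ 0 ≤ r.2 i)
    (hdisj : Disjoint (padRZ S₁ R₁) (padRZ S₂ R₂))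
    (lam₁ : ((↥S₁ → ℤ) × (↥S₁ → ℤ)) → (↥S₁ → ℤ) → ℝ)
    (lam₂ : ((↥S₂ → ℤ) × (↥S₂ → ℤ)) → (↥S₂ → ℤ) → ℝ)
    (hlam₁0 : ∀ r ∈ R₁, ∀ y, ¬ (∀ i, r.1 i ≤ y i) → lam₁ r y = 0)
    (hlam₂0 : ∀ r ∈ R₂, ∀ y, ¬ (∀ i, r.1 i ≤ y i) → lam₂ r y = 0)
    (Lam : ((ι → ℤ) × (ι → ℤ)) → (ι → ℤ) → ℝ)
    (hLam₁ : ∀ r ∈ R₁, ∀ x : ι → ℤ, Lam (padZ S₁ r.1, padZ S₁ r.2) x = lam₁ r (projZ S₁ x))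
    (hLam₂ : ∀ r ∈ R₂, ∀ x : ι → ℤ, Lam (padZ S₂ r.1, padZ S₂ r.2) x = lam₂ r (projZ S₂ x))
    (Γ : Set (ι → ℤ)) (hΓ : IsIrreducibleComponentZ (padRZ S₁ R₁ ∪ padRZ S₂ R₂) Γ)
    -- product-form functions: `f` for non-shared species, `f1`/`f2` for shared species
    (f f1 f2 : ι → ℤ → ℝ)
    (hfpos : ∀ i m, 0 ≤ m → 0 < f i m) (hf1pos : ∀ i m, 0 ≤ m → 0 < f1 i m)
    (hf2pos : ∀ i m, 0 ≤ m → 0 < f2 i m)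
    -- (B1): p₁(Γ) is a union of irreducible components of G₁ carrying product-form
    -- stationary distributions
    (hB1 : ∃ 𝒞 : Set (Set (↥S₁ → ℤ)),
      (∀ C ∈ 𝒞, IsIrreducibleComponentZ R₁ C) ∧ ⋃₀ 𝒞 = projZ S₁ '' Γ ∧
      ∀ C ∈ 𝒞, ∃ c > (0:ℝ), IsStationaryDist R₁ lam₁ C
        (C.indicator fun y => c * ∏ i : ↥S₁,
          (if (↑i : ι) ∈ S₂ then f1 ↑i (y i) else f ↑i (y i))))
    -- (B2): the analogous statement for G₂
    (hB2 : ∃ 𝒞 : Set (Set (↥S₂ → ℤ)),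
      (∀ C ∈ 𝒞, IsIrreducibleComponentZ R₂ C) ∧ ⋃₀ 𝒞 = projZ S₂ '' Γ ∧
      ∀ C ∈ 𝒞, ∃ c > (0:ℝ), IsStationaryDist R₂ lam₂ C
        (C.indicator fun y => c * ∏ i : ↥S₂,
          (if (↑i : ι) ∈ S₁ then f2 ↑i (y i) else f ↑i (y i))))
    -- (B3): the shared-species factors agree up to a positive constant on Γ
    (hB3 : ∃ α > (0:ℝ), ∀ x ∈ Γ, ∀ i ∈ S₁ ∩ S₂, α * f1 i (x i) = f2 i (x i))
    -- summability of the combined product-form function over Γ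
    (hsum : Summable (fun z : Γ =>
      ∏ i : ι, (if i ∈ S₁ ∩ S₂ then f2 i ((z : ι → ℤ) i) else f i ((z : ι → ℤ) i)))) :
    IsStationaryDist (padRZ S₁ R₁ ∪ padRZ S₂ R₂) Lam Γ
      (Γ.indicator fun x =>
        (∏ i : ι, (if i ∈ S₁ ∩ S₂ then f2 i (x i) else f i (x i))) /
        (∑' z : Γ, ∏ i : ι, (if i ∈ S₁ ∩ S₂ then f2 i ((z : ι → ℤ) i)
          else f i ((z : ι → ℤ) i)))) ∧
    MasterEq (padRZ S₁ R₁) Lam Γ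
      (Γ.indicator fun x =>
        (∏ i : ι, (if i ∈ S₁ ∩ S₂ then f2 i (x i) else f i (x i))) /
        (∑' z : Γ, ∏ i : ι, (if i ∈ S₁ ∩ S₂ then f2 i ((z : ι → ℤ) i)
          else f i ((z : ι → ℤ) i)))) ∧
    MasterEq (padRZ S₂ R₂) Lam Γ
      (Γ.indicator fun x =>
        (∏ i : ι, (if i ∈ S₁ ∩ S₂ then f2 i (x i) else f i (x i))) /
        (∑' z : Γ, ∏ i : ι, (if i ∈ S₁ ∩ S₂ then f2 i ((z : ι → ℤ) i)
          else f i ((z : ι → ℤ) i)))) :=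
  stmt10_general S₁ S₂ hcov R₁ R₂ hR₁nn hR₂nn hdisj lam₁ lam₂ hlam₁0 hlam₂0 Lam hLam₁ hLam₂ Γ hΓ f
    f1 f2 hfpos hf2pos hB1 hB2 hB3 hsum
end

section
/- Consider the reaction network S₁ ⇌ S₂ (rates κ₁,κ₂) and 2S₁ ⇌ S₁+S₂ (rates κ₃,κ₄) with general kinetics: the intensity of a reaction with reactant ν is κ_{ν→ν'} ∏_i ∏_{j=0}^{ν_i−1} θ_i(x_i−j), where θ₁, θ₂: Z → R_{≥0} satisfy θ_i(x) = 0 iff x ≤ 0. Then on each irreducible component Γ_N = {x₁+x₂ = N}, the distribution π(x₁,x₂) = Z⁻¹ f₁(x₁) f₂(x₂) with f₁(x₁) = d^{x₁}/(∏_{l=1}^{x₁} θ₁(l)) · ∏_{l=1}^{x₁} (κ₂+κ₄θ₁(l−1))/(κ₁+κ₃θ₁(l−1)) and f₂(x₂) = d^{x₂}/(∏_{l=1}^{x₂} θ₂(l)) (for any d > 0) is a stationary distribution. -/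
/-!
The product form satisfies, at every state of `ℤ²`, the balance of the two reaction vectors
`(1, -1)` and `(-1, 1)`:
`π(a+1, b-1) θ₁(a+1) (κ₁ + κ₃ θ₁(a)) = π(a, b) θ₂(b) (κ₂ + κ₄ θ₁(a))`.
Inside the quadrant it reduces to the one-step recursions of `f₁` and `f₂`; outside it both sides vanish
because `π` does or because `θᵢ(x) = 0` for `x ≤ 0`. The master equation at `(a, b)` is the
difference of the balance equations at `(a, b)` and at `(a - 1, b + 1)`.
-/

open Finset

lemma pos_of_nonneg_of_eq_zero_iff_nonpos {θ : ℤ → ℝ} (hnn : ∀ z, 0 ≤ θ z)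
    (h0 : ∀ z, θ z = 0 ↔ z ≤ 0) {z : ℤ} (hz : 0 < z) : 0 < θ z :=
  (hnn z).lt_of_ne' fun h => ((h0 z).1 h).not_gt hz

lemma pow_div_prod_mul_prod_succ {f u r : ℕ → ℝ} {d : ℝ}
    (hf : ∀ m, f m = d ^ m / (∏ l ∈ range m, u l) * ∏ l ∈ range m, r l) {m : ℕ}
    (hu : u m ≠ 0) : f (m + 1) * u m = f m * d * r m := by
  rw [hf, hf, prod_range_succ, prod_range_succ, pow_succ, mul_div_mul_comm]
  linear_combination (d ^ m / (∏ l ∈ range m, u l) * (∏ l ∈ range m, r l) * r m) *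
    div_mul_cancel₀ d hu

section Balance

variable {κ₁ κ₂ κ₃ κ₄ : ℝ} {θ₁ θ₂ : ℤ → ℝ}

lemma master_equation_of_balance {π : ℤ → ℤ → ℝ}
    (hbal : ∀ a b, π (a + 1) (b - 1) * (θ₁ (a + 1) * (κ₁ + κ₃ * θ₁ a)) =
      π a b * (θ₂ b * (κ₂ + κ₄ * θ₁ a))) (a b : ℤ) :
    π (a + 1) (b - 1) * (κ₁ * θ₁ (a + 1) + κ₃ * (θ₁ (a + 1) * θ₁ a)) +
      π (a - 1) (b + 1) * (κ₂ * θ₂ (b + 1) + κ₄ * (θ₁ (a - 1) * θ₂ (b + 1))) =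
      π a b * (κ₁ * θ₁ a + κ₃ * (θ₁ a * θ₁ (a - 1)) + κ₂ * θ₂ b + κ₄ * (θ₁ a * θ₂ b)) := by
  have hprev := hbal (a - 1) (b + 1)
  rw [sub_add_cancel, add_sub_cancel_right] at hprev
  linear_combination hbal a b - hprev

variable {f₁ f₂ : ℕ → ℝ} {d c : ℝ} {π : ℤ → ℤ → ℝ}

lemma balance_of_product_form (hθ₁0 : ∀ z, θ₁ z = 0 ↔ z ≤ 0) (hθ₂0 : ∀ z, θ₂ z = 0 ↔ z ≤ 0)
    (hrec₁ : ∀ m : ℕ, f₁ (m + 1) * θ₁ (m + 1) * (κ₁ + κ₃ * θ₁ m) =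
      f₁ m * d * (κ₂ + κ₄ * θ₁ m))
    (hrec₂ : ∀ m : ℕ, f₂ (m + 1) * θ₂ (m + 1) = f₂ m * d)
    (hπ : ∀ a b : ℤ, π a b = if 0 ≤ a ∧ 0 ≤ b then c * f₁ a.toNat * f₂ b.toNat else 0)
    (a b : ℤ) :
    π (a + 1) (b - 1) * (θ₁ (a + 1) * (κ₁ + κ₃ * θ₁ a)) =
      π a b * (θ₂ b * (κ₂ + κ₄ * θ₁ a)) := by
  by_cases hab : 0 ≤ a ∧ 0 < b
  · obtain ⟨m, rfl⟩ := Int.eq_ofNat_of_zero_le hab.1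
    obtain ⟨k, rfl⟩ : ∃ k : ℕ, b = k + 1 := ⟨(b - 1).toNat, by omega⟩
    rw [hπ, hπ, if_pos (by omega), if_pos (by omega)]
    simp only [add_sub_cancel_right, Int.toNat_natCast_add_one, Int.toNat_natCast]
    linear_combination (c * f₂ k) * hrec₁ m - (c * f₁ m * (κ₂ + κ₄ * θ₁ m)) * hrec₂ k
  · have hlhs : π (a + 1) (b - 1) = 0 ∨ θ₁ (a + 1) = 0 := by
      rw [hπ, hθ₁0, ite_eq_right_iff]
      omega
    have hrhs : π a b = 0 ∨ θ₂ b = 0 := by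
      rw [hπ, hθ₂0, ite_eq_right_iff]
      omega
    rcases hlhs with h | h <;> rcases hrhs with h' | h' <;> simp [h, h']

lemma sum_product_form (hπ : ∀ a b : ℤ, π a b =
      if 0 ≤ a ∧ 0 ≤ b then c * f₁ a.toNat * f₂ b.toNat else 0) (N : ℕ) :
    ∑ p ∈ range (N + 1), π p ((N : ℤ) - p) = c * ∑ p ∈ range (N + 1), f₁ p * f₂ (N - p) := by
  rw [mul_sum]
  refine sum_congr rfl fun p hp => ?_
  have hpN : p ≤ N := Nat.lt_succ_iff.1 (mem_range.1 hp)
  rw [hπ, if_pos (by omega), Int.toNat_natCast, ← Nat.cast_sub hpN, Int.toNat_natCast, mul_assoc]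

end Balance

/-- for the network `S₁ ⇌ S₂`, `2S₁ ⇌ S₁+S₂` with general kinetics given
by `θ₁, θ₂ : ℤ → ℝ_{≥0}` (with `θᵢ(x) = 0` iff `x ≤ 0`), the product-form distribution
with `f₁(x₁) = d^{x₁}/(∏_{l=1}^{x₁} θ₁(l)) ∏_{l=1}^{x₁}(κ₂+κ₄θ₁(l-1))/(κ₁+κ₃θ₁(l-1))`
and `f₂(x₂) = d^{x₂}/(∏_{l=1}^{x₂} θ₂(l))` is a stationary distribution on every
irreducible component `Γ_N = {x₁ + x₂ = N}`. -/
theorem stmt16 (κ₁ κ₂ κ₃ κ₄ : ℝ) (h₁ : 0 < κ₁) (h₂ : 0 < κ₂) (h₃ : 0 < κ₃) (h₄ : 0 < κ₄)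
    (θ₁ θ₂ : ℤ → ℝ)
    (hθ₁nn : ∀ z, 0 ≤ θ₁ z) (hθ₂nn : ∀ z, 0 ≤ θ₂ z)
    (hθ₁0 : ∀ z, θ₁ z = 0 ↔ z ≤ 0) (hθ₂0 : ∀ z, θ₂ z = 0 ↔ z ≤ 0)
    (d : ℝ) (hd : 0 < d) (N : ℕ)
    (f₁ f₂ : ℕ → ℝ)
    (hf₁ : ∀ m : ℕ, f₁ m = d ^ m / (∏ l ∈ Finset.range m, θ₁ ((l : ℤ) + 1)) *
      ∏ l ∈ Finset.range m, (κ₂ + κ₄ * θ₁ (l : ℤ)) / (κ₁ + κ₃ * θ₁ (l : ℤ)))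
    (hf₂ : ∀ m : ℕ, f₂ m = d ^ m / (∏ l ∈ Finset.range m, θ₂ ((l : ℤ) + 1)))
    (Z : ℝ) (hZ : Z = ∑ p ∈ Finset.range (N + 1), f₁ p * f₂ (N - p))
    (π : ℤ → ℤ → ℝ)
    (hπ : ∀ a b : ℤ, π a b =
      if 0 ≤ a ∧ 0 ≤ b then Z⁻¹ * f₁ a.toNat * f₂ b.toNat else 0) :
    -- the master equation holds at every state of Γ_N
    (∀ a b : ℤ, 0 ≤ a → 0 ≤ b → a + b = (N : ℤ) →
      π (a + 1) (b - 1) * (κ₁ * θ₁ (a + 1) + κ₃ * (θ₁ (a + 1) * θ₁ a)) +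
      π (a - 1) (b + 1) * (κ₂ * θ₂ (b + 1) + κ₄ * (θ₁ (a - 1) * θ₂ (b + 1))) =
      π a b * (κ₁ * θ₁ a + κ₃ * (θ₁ a * θ₁ (a - 1)) +
        κ₂ * θ₂ b + κ₄ * (θ₁ a * θ₂ b))) ∧
    -- π is a probability distribution on Γ_N
    (∑ p ∈ Finset.range (N + 1), π p ((N : ℤ) - p)) = 1 := by
  have hθ₁pos : ∀ z, 0 < z → 0 < θ₁ z := fun _ => pos_of_nonneg_of_eq_zero_iff_nonpos hθ₁nn hθ₁0
  have hθ₂pos : ∀ z, 0 < z → 0 < θ₂ z := fun _ => pos_of_nonneg_of_eq_zero_iff_nonpos hθ₂nn hθ₂0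
  have hden : ∀ z, 0 < κ₁ + κ₃ * θ₁ z := fun z => by have := hθ₁nn z; positivity
  have hnum : ∀ z, 0 < κ₂ + κ₄ * θ₁ z := fun z => by have := hθ₁nn z; positivity
  have hf₂' : ∀ m : ℕ, f₂ m = d ^ m / (∏ l ∈ range m, θ₂ ((l : ℤ) + 1)) * ∏ _l ∈ range m, 1 := by
    simpa using hf₂
  have hrec₁ : ∀ m : ℕ, f₁ (m + 1) * θ₁ (m + 1) * (κ₁ + κ₃ * θ₁ m) =
      f₁ m * d * (κ₂ + κ₄ * θ₁ m) := fun m => by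
    rw [pow_div_prod_mul_prod_succ hf₁ (hθ₁pos _ (by positivity)).ne', mul_assoc,
      div_mul_cancel₀ _ (hden m).ne']
  have hrec₂ : ∀ m : ℕ, f₂ (m + 1) * θ₂ (m + 1) = f₂ m * d := fun m => by
    rw [pow_div_prod_mul_prod_succ hf₂' (hθ₂pos _ (by positivity)).ne', mul_one]
  have hf₁pos : ∀ m, 0 < f₁ m := fun m => by
    rw [hf₁]
    exact mul_pos (div_pos (pow_pos hd m) (prod_pos fun l _ => hθ₁pos _ (by positivity)))
      (prod_pos fun l _ => div_pos (hnum l) (hden l))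
  have hf₂pos : ∀ m, 0 < f₂ m := fun m => by
    rw [hf₂]
    exact div_pos (pow_pos hd m) (prod_pos fun l _ => hθ₂pos _ (by positivity))
  have hZpos : 0 < Z := hZ ▸ sum_pos (fun p _ => mul_pos (hf₁pos p) (hf₂pos _)) ⟨0, by simp⟩
  exact ⟨fun a b _ _ _ => master_equation_of_balance
      (balance_of_product_form hθ₁0 hθ₂0 hrec₁ hrec₂ hπ) a b,
    by rw [sum_product_form hπ, ← hZ, inv_mul_cancel₀ hZpos.ne']⟩
end
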